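/- arXiv:1803.06669 — 2 statements merged into one kernel-verified Lean document; each statement's English description precedes it below -/
import Mathlib

section
/- For X ~ N(d, 1) with d ∈ ℝ and u > 0, E[X² | |X| > u] = 1 + d² + A + B, where A = u(φ(u-d) + φ(u+d))/(Φ(d-u) + Φ(-d-u)) and B = d(φ(u-d) - φ(u+d))/(Φ(d-u) + Φ(-d-u)). -/
open MeasureTheory Real

/-- Standard normal density. -/
noncomputable def phi (x : ℝ) : ℝ := (Real.sqrt (2 * π))⁻¹ * Real.exp (-x ^ 2 / 2)

/-- Standard normal CDF. -/
noncomputable def Phi (x : ℝ) : ℝ := ∫ t in Set.Iic x, phi t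

/-!
Shifting by `d` reduces the tail integral `∫_{x > a} x² φ(x - d)` to the truncated moments
`∫_{x > b} xᵏ φ(x)`, `k ≤ 2`, of the standard normal law. Since `φ' = -x φ`, these are
`Φ(-b)`, `φ(b)` and `b φ(b) + Φ(-b)` (the last by parts, as `x² φ = φ - (x φ)'`).
The reflection `x ↦ -x` turns the lower tail `x < -u` into an upper tail with `d` replaced by
`-d`, and adding the two tails gives the numerator `(1 + d²) P(|X| > u) + u (φ(u-d) + φ(u+d))
+ d (φ(u-d) - φ(u+d))`.
-/

open Set Filter Topology

lemma setIntegral_Ioi_comp_sub {E : Type*} [NormedAddCommGroup E] [NormedSpace ℝ E]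
    (f : ℝ → E) (a d : ℝ) : ∫ x in Ioi a, f (x - d) = ∫ x in Ioi (a - d), f x := by
  rw [← integral_indicator measurableSet_Ioi, ← integral_indicator measurableSet_Ioi,
    ← integral_sub_right_eq_self (indicator (Ioi (a - d)) f) d]
  congr 1 with x
  simp only [indicator, mem_Ioi, sub_lt_sub_iff_right]

lemma setOf_lt_abs_eq_Iio_union_Ioi (u : ℝ) : {x : ℝ | u < |x|} = Iio (-u) ∪ Ioi u := by
  ext x
  simp [lt_abs, lt_neg, or_comm]

lemma phi_pos (x : ℝ) : 0 < phi x := by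
  unfold phi
  positivity

lemma phi_neg (x : ℝ) : phi (-x) = phi x := by
  simp [phi]

lemma phi_eq_mul_exp : phi = fun x => (√(2 * π))⁻¹ * rexp (-(1 / 2) * x ^ 2) := by
  ext x
  rw [phi]
  ring_nf

lemma hasDerivAt_phi (x : ℝ) : HasDerivAt phi (-x * phi x) x := by
  have h := ((hasDerivAt_pow 2 x).neg.div_const 2).exp.const_mul (√(2 * π))⁻¹
  refine h.congr_deriv ?_
  simp only [phi, Pi.neg_apply]
  ring

lemma integrable_phi : Integrable phi := by
  rw [phi_eq_mul_exp]
  exact (integrable_exp_neg_mul_sq (by norm_num)).const_mul _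

lemma integrable_mul_phi : Integrable fun x => x * phi x := by
  refine ((integrable_mul_exp_neg_mul_sq (by norm_num : (0 : ℝ) < 1 / 2)).const_mul
    (√(2 * π))⁻¹).congr (.of_forall fun x => ?_)
  simp only [phi_eq_mul_exp]
  ring

lemma integrable_sq_mul_phi : Integrable fun x => x ^ 2 * phi x := by
  refine ((integrable_rpow_mul_exp_neg_mul_sq (by norm_num : (0 : ℝ) < 1 / 2)
    (by norm_num : (-1 : ℝ) < 2)).const_mul (√(2 * π))⁻¹).congr (.of_forall fun x => ?_)
  simp only [rpow_two, phi_eq_mul_exp]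
  ring

lemma integrable_sq_mul_phi_sub (d : ℝ) : Integrable fun x => x ^ 2 * phi (x - d) := by
  have h : Integrable fun x => x ^ 2 * phi x + 2 * d * (x * phi x) + d ^ 2 * phi x :=
    (integrable_sq_mul_phi.add (integrable_mul_phi.const_mul _)).add
      (integrable_phi.const_mul _)
  refine (h.comp_sub_right d).congr (.of_forall fun x => ?_)
  ring

lemma tendsto_phi_atTop : Tendsto phi atTop (𝓝 0) := by
  have h : Tendsto (fun x : ℝ => -(1 / 2) * x ^ 2) atTop atBot :=
    (tendsto_pow_atTop two_ne_zero).const_mul_atTop_of_neg (by norm_num)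
  rw [phi_eq_mul_exp, ← mul_zero (√(2 * π))⁻¹]
  exact (tendsto_exp_atBot.comp h).const_mul _

lemma tendsto_mul_phi_atTop : Tendsto (fun x => x * phi x) atTop (𝓝 0) := by
  have hexp : Tendsto (fun x : ℝ => rexp (-(1 / 2) * x)) atTop (𝓝 0) :=
    tendsto_exp_atBot.comp (tendsto_id.const_mul_atTop_of_neg (by norm_num))
  have h := ((rpow_mul_exp_neg_mul_sq_isLittleO_exp_neg (by norm_num : (0 : ℝ) < 1 / 2)
    1).tendsto_zero_of_tendsto hexp).const_mul (√(2 * π))⁻¹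
  rw [mul_zero] at h
  refine h.congr fun x => ?_
  rw [rpow_one, phi_eq_mul_exp]
  ring

lemma Phi_pos (x : ℝ) : 0 < Phi x := by
  have hsupp : Function.support phi = univ :=
    Function.support_eq_univ fun y => (phi_pos y).ne'
  rw [Phi, setIntegral_pos_iff_support_of_nonneg_ae (.of_forall fun y => (phi_pos y).le)
    integrable_phi.integrableOn, hsupp, univ_inter]
  simp

lemma setIntegral_Ioi_phi (b : ℝ) : ∫ x in Ioi b, phi x = Phi (-b) := by
  simp_rw [Phi, ← integral_comp_neg_Ioi, phi_neg]

lemma setIntegral_Ioi_mul_phi (b : ℝ) : ∫ x in Ioi b, x * phi x = phi b := by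
  have h := integral_Ioi_of_hasDerivAt_of_tendsto' (a := b) (f := fun x => -phi x)
    (fun x _ => (hasDerivAt_phi x).neg.congr_deriv (by ring)) integrable_mul_phi.integrableOn
    (by simpa using tendsto_phi_atTop.neg)
  simpa using h

lemma setIntegral_Ioi_sq_mul_phi (b : ℝ) :
    ∫ x in Ioi b, x ^ 2 * phi x = b * phi b + Phi (-b) := by
  have h := integral_Ioi_of_hasDerivAt_of_tendsto' (a := b) (f := fun x => -(x * phi x))
    (f' := fun x => x ^ 2 * phi x - phi x)
    (fun x _ => ((hasDerivAt_id x).mul (hasDerivAt_phi x)).neg.congr_deriv (by simp; ring))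
    (integrable_sq_mul_phi.sub integrable_phi).integrableOn
    (by simpa using tendsto_mul_phi_atTop.neg)
  rw [integral_sub integrable_sq_mul_phi.integrableOn integrable_phi.integrableOn,
    setIntegral_Ioi_phi] at h
  linarith

lemma setIntegral_Ioi_sq_mul_phi_sub (d a : ℝ) :
    ∫ x in Ioi a, x ^ 2 * phi (x - d) = (1 + d ^ 2) * Phi (d - a) + (a + d) * phi (a - d) := by
  have hexpand : ∫ x in Ioi a, x ^ 2 * phi (x - d)
      = ∫ x in Ioi (a - d), (x ^ 2 * phi x + (2 * d * (x * phi x) + d ^ 2 * phi x)) := by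
    rw [← setIntegral_Ioi_comp_sub]
    congr 1 with x
    ring
  rw [hexpand, integral_add integrable_sq_mul_phi.integrableOn
      ((integrable_mul_phi.const_mul (2 * d)).fun_add
        (integrable_phi.const_mul (d ^ 2))).integrableOn,
    integral_add (integrable_mul_phi.const_mul _).integrableOn
      (integrable_phi.const_mul _).integrableOn,
    integral_const_mul, integral_const_mul, setIntegral_Ioi_sq_mul_phi, setIntegral_Ioi_mul_phi,
    setIntegral_Ioi_phi, neg_sub]
  ring

lemma setIntegral_Iio_sq_mul_phi_sub (d u : ℝ) :
    ∫ x in Iio (-u), x ^ 2 * phi (x - d) = (1 + d ^ 2) * Phi (-d - u) + (u - d) * phi (u + d) := by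
  have hreflect : ∫ x in Iio (-u), x ^ 2 * phi (x - d) = ∫ x in Ioi u, x ^ 2 * phi (x - -d) := by
    rw [← integral_Iic_eq_integral_Iio, ← integral_comp_neg_Ioi]
    congr 1 with x
    rw [neg_sq, ← phi_neg, neg_sub, sub_neg_eq_add, sub_neg_eq_add, add_comm]
  rw [hreflect, setIntegral_Ioi_sq_mul_phi_sub, sub_neg_eq_add, neg_sq, sub_eq_add_neg u d]

/-- For X ~ N(d,1) and u > 0, E[X² | |X| > u] = 1 + d² + A + B. -/
theorem stmt6 (d u : ℝ) (hu : 0 < u) :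
    (∫ x in {x : ℝ | u < |x|}, x ^ 2 * phi (x - d)) / (Phi (d - u) + Phi (-d - u))
      = 1 + d ^ 2
        + u * (phi (u - d) + phi (u + d)) / (Phi (d - u) + Phi (-d - u))
        + d * (phi (u - d) - phi (u + d)) / (Phi (d - u) + Phi (-d - u)) := by
  have hdisj : Disjoint (Iio (-u)) (Ioi u) := Iio_disjoint_Ioi_of_le (by linarith)
  rw [setOf_lt_abs_eq_Iio_union_Ioi, setIntegral_union hdisj measurableSet_Ioi
      (integrable_sq_mul_phi_sub d).integrableOn (integrable_sq_mul_phi_sub d).integrableOn,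
    setIntegral_Iio_sq_mul_phi_sub, setIntegral_Ioi_sq_mul_phi_sub]
  have hN : Phi (d - u) + Phi (-d - u) ≠ 0 := (add_pos (Phi_pos _) (Phi_pos _)).ne'
  field_simp
  ring
end

section
/- For X ~ N(d,1) with |d| > u > 0, E[X² | |X| > u] ≥ d² + 1. -/
open MeasureTheory Real

/-!
Under `X ~ N(d, 1)` the unconditional second moment is `E[X²] = d² + 1`. On the excluded
region `|X| ≤ u < |d|` the integrand satisfies `X² ≤ u² < d² + 1`, so discarding it can only
raise the average of `X²`.
-/

open Set ProbabilityTheory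

theorem mul_measureReal_le_setIntegral_of_le_on_compl {α : Type*} [MeasurableSpace α]
    {μ : Measure α} [IsFiniteMeasure μ] {f : α → ℝ} {s : Set α} {c : ℝ}
    (hf : Integrable f μ) (hs : MeasurableSet s) (hmean : c * μ.real univ ≤ ∫ x, f x ∂μ)
    (hle : ∀ x ∈ sᶜ, f x ≤ c) :
    c * μ.real s ≤ ∫ x in s, f x ∂μ := by
  have hcompl : ∫ x in sᶜ, f x ∂μ ≤ μ.real sᶜ * c := by
    rw [← smul_eq_mul, ← setIntegral_const]
    exact setIntegral_mono_on hf.integrableOn (integrable_const c).integrableOn hs.compl hle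
  rw [← measureReal_add_measureReal_compl hs, mul_add] at hmean
  linarith [integral_add_compl hs hf]

theorem integral_sq_gaussianReal (μ : ℝ) (v : NNReal) :
    ∫ x, x ^ 2 ∂gaussianReal μ v = μ ^ 2 + v := by
  have h := variance_eq_sub (memLp_id_gaussianReal (μ := μ) (v := v) 2)
  simp only [variance_id_gaussianReal, Pi.pow_apply, id_eq, integral_id_gaussianReal] at h
  linarith

theorem measureReal_gaussianReal_pos_of_isOpen (μ : ℝ) {v : NNReal} (hv : v ≠ 0) {s : Set ℝ}
    (hs : IsOpen s) (hne : s.Nonempty) : 0 < (gaussianReal μ v).real s :=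
  ENNReal.toReal_pos (fun h => hs.measure_ne_zero volume hne
    (gaussianReal_absolutelyContinuous' μ hv h)) (measure_ne_top _ _)

theorem phi_sub_eq_gaussianPDFReal (d x : ℝ) : phi (x - d) = gaussianPDFReal d 1 x := by
  simp [phi, gaussianPDFReal]

theorem setIntegral_mul_phi_sub (f : ℝ → ℝ) (d : ℝ) {s : Set ℝ} (hs : MeasurableSet s) :
    ∫ x in s, f x * phi (x - d) = ∫ x in s, f x ∂gaussianReal d 1 := by
  rw [← integral_indicator hs, ← integral_indicator hs,
    integral_gaussianReal_eq_integral_smul one_ne_zero]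
  congr 1 with x
  by_cases hx : x ∈ s <;> simp [hx, phi_sub_eq_gaussianPDFReal, mul_comm]

theorem Phi_eq_measureReal_Iic (a : ℝ) : Phi a = (gaussianReal 0 1).real (Iic a) := by
  rw [measureReal_def, gaussianReal_apply_eq_integral _ one_ne_zero,
    ENNReal.toReal_ofReal (setIntegral_nonneg measurableSet_Iic
      fun x _ => gaussianPDFReal_nonneg _ _ _)]
  simp only [Phi, ← phi_sub_eq_gaussianPDFReal, sub_zero]

theorem measureReal_Ioi_gaussianReal (d u : ℝ) :
    (gaussianReal d 1).real (Ioi u) = Phi (d - u) := by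
  have := nullSingletonClass_gaussianReal (μ := 0) one_ne_zero
  rw [Phi_eq_measureReal_Iic, ← measureReal_congr Iio_ae_eq_Iic, ← sub_self d,
    ← gaussianReal_map_const_sub, map_measureReal_apply (by fun_prop) measurableSet_Iio]
  congr 1
  ext x
  simp

theorem measureReal_Iio_gaussianReal (d u : ℝ) :
    (gaussianReal d 1).real (Iio u) = Phi (u - d) := by
  have := nullSingletonClass_gaussianReal (μ := 0) one_ne_zero
  rw [Phi_eq_measureReal_Iic, ← measureReal_congr Iio_ae_eq_Iic, ← sub_self d,
    ← gaussianReal_map_sub_const, map_measureReal_apply (by fun_prop) measurableSet_Iio]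
  congr 1
  ext x
  simp

theorem measureReal_setOf_lt_abs_gaussianReal (d : ℝ) {u : ℝ} (hu : 0 ≤ u) :
    (gaussianReal d 1).real {x | u < |x|} = Phi (d - u) + Phi (-d - u) := by
  have hset : {x : ℝ | u < |x|} = Iio (-u) ∪ Ioi u := by
    ext x
    rw [mem_ofPred_eq, lt_abs, mem_union, mem_Iio, mem_Ioi, lt_neg, or_comm]
  have hdisj : Disjoint (Iio (-u)) (Ioi u) :=
    (Iic_disjoint_Ioi (by linarith : -u ≤ u)).mono_left Iio_subset_Iic_self
  rw [hset, measureReal_union hdisj measurableSet_Ioi, measureReal_Iio_gaussianReal,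
    measureReal_Ioi_gaussianReal, add_comm, neg_sub_comm]

/-- For X ~ N(d,1) with |d| > u > 0, E[X² | |X| > u] ≥ d² + 1. -/
theorem stmt7 (d u : ℝ) (hu : 0 < u) (hd : u < |d|) :
    d ^ 2 + 1 ≤
      (∫ x in {x : ℝ | u < |x|}, x ^ 2 * phi (x - d)) / (Phi (d - u) + Phi (-d - u)) := by
  have hS : IsOpen {x : ℝ | u < |x|} := isOpen_lt continuous_const continuous_abs
  have hpos : 0 < (gaussianReal d 1).real {x | u < |x|} :=
    measureReal_gaussianReal_pos_of_isOpen d one_ne_zero hS ⟨d, hd⟩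
  rw [setIntegral_mul_phi_sub (· ^ 2) d hS.measurableSet,
    ← measureReal_setOf_lt_abs_gaussianReal d hu.le, le_div_iff₀ hpos]
  refine mul_measureReal_le_setIntegral_of_le_on_compl (memLp_id_gaussianReal 2).integrable_sq
    hS.measurableSet ?_ fun x hx => ?_
  · simp [integral_sq_gaussianReal]
  · have hx : |x| ≤ u := not_lt.mp hx
    nlinarith [sq_abs x, sq_abs d, abs_nonneg x]
end
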